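/- arXiv:1004.1466 — 3 statements merged into one kernel-verified Lean document; each statement's English description precedes it below -/
import Mathlib

section
/- Fix $\lambda \in \mathbb{R}$, $\kappa < 0$, $A > 0$, and constants $C_+ \in \mathbb{R}$. Define $h_+(X) = \frac{1}{\kappa}\log(A-X) + C_+$ for $X \in (0,A)$, and define recursively $a_0^+(X) = e^{i\lambda h_+(X)}$ and $a_n^+(X) = e^{i\lambda h_+(X)} \int_X^A \int_Y^A e^{-2i\lambda h_+(Y)} e^{i\lambda h_+(T)} a_{n-1}^+(T)\, dT\, dY$. Then for all $n \ge 0$, $a_n^+(X) = e^{i\lambda C_+} \cdot \frac{\Gamma(1-\nu)}{2^{2n}\,\Gamma(n+1-\nu)\, n!} \, (A-X)^{2n + i\lambda/\kappa}$, where $\nu = \frac12 - \frac{i\lambda}{\kappa}$. -/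
/-!
Write `μ = iλ/κ`, so that `e^{iλh₊(X)} = e^{iλC₊} (A-X)^μ` with `Re μ = 0`. If
`aₙ⁺(X) = e^{iλC₊} cₙ (A-X)^{2n+μ}`, the integrand of the recursion collapses to
`cₙ (A-Y)^{-2μ} (A-T)^{2n+2μ}`, and integrating the two powers of `A - ·` gives
`cₙ₊₁ = cₙ / ((2n+2μ+1)(2n+2)) = cₙ / (4 (n+1-ν)(n+1))`. This is exactly the ratio of
consecutive values of `Γ(1-ν) / (2^{2n} Γ(n+1-ν) n!)`, by `Γ(z+1) = zΓ(z)`.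
-/

open Real Set MeasureTheory Complex

lemma integral_Ioo_ofReal_sub_cpow {X A : ℝ} (hXA : X < A) {s : ℂ} (hs : -1 < s.re) :
    ∫ T in Ioo X A, ((A - T : ℝ) : ℂ) ^ s = ((A - X : ℝ) : ℂ) ^ (s + 1) / (s + 1) := by
  have hs₁ : s + 1 ≠ 0 := by
    intro h
    have := congrArg Complex.re h
    simp only [add_re, one_re, zero_re] at this
    linarith
  rw [← integral_Ioc_eq_integral_Ioo, ← intervalIntegral.integral_of_le hXA.le,
    intervalIntegral.integral_comp_sub_left (fun u : ℝ => (u : ℂ) ^ s) A, sub_self,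
    integral_cpow (Or.inl hs), ofReal_zero, zero_cpow hs₁, sub_zero]

lemma integral_Ioo_cpow_mul_integral_Ioo_cpow {X A : ℝ} (hXA : X < A) {a s : ℂ}
    (hs : -1 < s.re) (has : -1 < (a + s + 1).re) :
    ∫ Y in Ioo X A, ((A - Y : ℝ) : ℂ) ^ a * ∫ T in Ioo Y A, ((A - T : ℝ) : ℂ) ^ s =
      ((A - X : ℝ) : ℂ) ^ (a + s + 2) / ((s + 1) * (a + s + 2)) := by
  have inner : ∀ Y ∈ Ioo X A, ((A - Y : ℝ) : ℂ) ^ a * ∫ T in Ioo Y A, ((A - T : ℝ) : ℂ) ^ s =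
      ((A - Y : ℝ) : ℂ) ^ (a + s + 1) / (s + 1) := by
    intro Y hY
    have hAY : ((A - Y : ℝ) : ℂ) ≠ 0 := ofReal_ne_zero.mpr (sub_ne_zero.mpr hY.2.ne')
    rw [integral_Ioo_ofReal_sub_cpow hY.2 hs, mul_div_assoc', ← cpow_add _ _ hAY, add_assoc]
  rw [setIntegral_congr_fun measurableSet_Ioo inner, integral_div,
    integral_Ioo_ofReal_sub_cpow hXA has, div_div, add_assoc (a + s), one_add_one_eq_two]
  ring_nf

lemma exp_mul_ofReal_one_div_mul_log_add (c : ℂ) (κ C : ℝ) {r : ℝ} (hr : 0 < r) :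
    exp (c * ((1 / κ * Real.log r + C : ℝ) : ℂ)) = exp (c * C) * (r : ℂ) ^ (c / κ) := by
  rw [cpow_def_of_ne_zero (ofReal_ne_zero.mpr hr.ne'), ← ofReal_log hr.le, ← Complex.exp_add]
  push_cast
  ring_nf

noncomputable def modelCoeff (ν : ℂ) (n : ℕ) : ℂ :=
  Gamma (1 - ν) / (2 ^ (2 * n) * Gamma (n + 1 - ν) * n.factorial)

lemma modelCoeff_zero {ν : ℂ} (hν : Gamma (1 - ν) ≠ 0) : modelCoeff ν 0 = 1 := by
  simp [modelCoeff, hν]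

lemma modelCoeff_succ {ν : ℂ} {n : ℕ} (hν : (n : ℂ) + 1 - ν ≠ 0) :
    modelCoeff ν (n + 1) = modelCoeff ν n / (4 * ((n + 1 - ν) * (n + 1))) := by
  have hΓ : Gamma (((n + 1 : ℕ) : ℂ) + 1 - ν) = (n + 1 - ν) * Gamma (n + 1 - ν) := by
    rw [← Gamma_add_one _ hν]
    push_cast
    ring_nf
  rw [modelCoeff, modelCoeff, hΓ, Nat.factorial_succ, div_div]
  push_cast
  ring

-- `aₙ⁺(X) = modelTerm (iλC₊) (iλ/κ) n (A - X)`
noncomputable def modelTerm (θ μ : ℂ) (n : ℕ) (r : ℝ) : ℂ :=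
  exp θ * modelCoeff (1 / 2 - μ) n * (r : ℂ) ^ (2 * n + μ)

lemma modelTerm_zero (θ : ℂ) {μ : ℂ} (hμ : -1 / 2 < μ.re) (r : ℝ) :
    modelTerm θ μ 0 r = exp θ * (r : ℂ) ^ μ := by
  have hΓ : Gamma (1 - (1 / 2 - μ)) ≠ 0 := Gamma_ne_zero_of_re_pos (by norm_num; linarith)
  rw [modelTerm, modelCoeff_zero hΓ]
  simp

lemma modelTerm_integrand (θ μ : ℂ) (n : ℕ) (r : ℝ) {s : ℝ} (hs : 0 < s) :
    exp (-2 * θ) * (r : ℂ) ^ (-2 * μ) * (exp θ * (s : ℂ) ^ μ) * modelTerm θ μ n s =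
      modelCoeff (1 / 2 - μ) n * ((r : ℂ) ^ (-2 * μ) * (s : ℂ) ^ (2 * n + 2 * μ)) := by
  have hexp : exp (-2 * θ) * (exp θ * exp θ) = 1 := by
    rw [← Complex.exp_add, ← Complex.exp_add, ← Complex.exp_zero]
    ring_nf
  have hpow : (s : ℂ) ^ (2 * n + 2 * μ) = (s : ℂ) ^ μ * (s : ℂ) ^ (2 * n + μ) := by
    rw [← cpow_add _ _ (ofReal_ne_zero.mpr hs.ne')]
    ring_nf
  rw [modelTerm, hpow]
  linear_combination (modelCoeff (1 / 2 - μ) n * (r : ℂ) ^ (-2 * μ) * (s : ℂ) ^ μ *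
    (s : ℂ) ^ (2 * n + μ)) * hexp

lemma modelTerm_succ {X A : ℝ} (hXA : X < A) (θ : ℂ) {μ : ℂ} (hμ : -1 / 2 < μ.re) (n : ℕ) :
    exp θ * ((A - X : ℝ) : ℂ) ^ μ *
        ∫ Y in Ioo X A, ∫ T in Ioo Y A,
          exp (-2 * θ) * ((A - Y : ℝ) : ℂ) ^ (-2 * μ) * (exp θ * ((A - T : ℝ) : ℂ) ^ μ) *
            modelTerm θ μ n (A - T) =
      modelTerm θ μ (n + 1) (A - X) := by
  have inner : ∀ Y ∈ Ioo X A,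
      ∫ T in Ioo Y A, exp (-2 * θ) * ((A - Y : ℝ) : ℂ) ^ (-2 * μ) *
          (exp θ * ((A - T : ℝ) : ℂ) ^ μ) * modelTerm θ μ n (A - T) =
        modelCoeff (1 / 2 - μ) n * (((A - Y : ℝ) : ℂ) ^ (-2 * μ) *
          ∫ T in Ioo Y A, ((A - T : ℝ) : ℂ) ^ (2 * n + 2 * μ)) := by
    intro Y _
    rw [← integral_const_mul, ← integral_const_mul]
    exact setIntegral_congr_fun measurableSet_Ioo fun T hT =>
      modelTerm_integrand θ μ n _ (sub_pos.mpr hT.2)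
  have hn : (0 : ℝ) ≤ n := n.cast_nonneg
  have hν : (n : ℂ) + 1 - (1 / 2 - μ) ≠ 0 := fun h => by
    have := congrArg re h
    norm_num at this
    linarith
  have hAX : ((A - X : ℝ) : ℂ) ≠ 0 := ofReal_ne_zero.mpr (sub_ne_zero.mpr hXA.ne')
  have hexponent : -2 * μ + (2 * n + 2 * μ) + 2 = 2 * ((n + 1 : ℕ) : ℂ) := by push_cast; ring
  have hden : (2 * n + 2 * μ + 1) * (2 * ((n + 1 : ℕ) : ℂ)) =
      4 * ((n + 1 - (1 / 2 - μ)) * (n + 1)) := by push_cast; ring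
  rw [setIntegral_congr_fun measurableSet_Ioo inner, integral_const_mul,
    integral_Ioo_cpow_mul_integral_Ioo_cpow hXA (by norm_num; linarith) (by norm_num; linarith),
    hexponent, hden, modelTerm, modelCoeff_succ hν, add_comm _ μ, cpow_add _ _ hAX]
  ring

theorem model_coefficients_formula_general
    (lam κ A Cp : ℝ)
    (hplus : ℝ → ℝ) (hhp : ∀ X ∈ Ioo 0 A, hplus X = (1 / κ) * Real.log (A - X) + Cp)
    (ap : ℕ → ℝ → ℂ)
    (h0 : ∀ X ∈ Ioo 0 A, ap 0 X = Complex.exp (Complex.I * (lam : ℂ) * (hplus X : ℂ)))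
    (hrec : ∀ n : ℕ, ∀ X ∈ Ioo 0 A, ap (n + 1) X =
      Complex.exp (Complex.I * (lam : ℂ) * (hplus X : ℂ)) *
        ∫ Y in Ioo X A, ∫ T in Ioo Y A,
          Complex.exp (-2 * Complex.I * (lam : ℂ) * (hplus Y : ℂ)) *
            Complex.exp (Complex.I * (lam : ℂ) * (hplus T : ℂ)) * ap n T) :
    ∀ n : ℕ, ∀ X ∈ Ioo 0 A,
      ap n X = Complex.exp (Complex.I * (lam : ℂ) * (Cp : ℂ)) *
        (Complex.Gamma (1 - (1 / 2 - Complex.I * (lam : ℂ) / (κ : ℂ))) /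
          (2 ^ (2 * n) *
            Complex.Gamma ((n : ℂ) + 1 - (1 / 2 - Complex.I * (lam : ℂ) / (κ : ℂ))) *
            (n.factorial : ℂ))) *
        ((A - X : ℝ) : ℂ) ^ ((2 * n : ℂ) + Complex.I * (lam : ℂ) / (κ : ℂ)) := by
  set θ : ℂ := I * lam * Cp with hθ_def
  set μ : ℂ := I * lam / κ with hμ_def
  have hμ : -1 / 2 < μ.re := by norm_num [hμ_def, div_re]
  have phase : ∀ X ∈ Ioo 0 A, exp (I * lam * hplus X) = exp θ * ((A - X : ℝ) : ℂ) ^ μ :=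
    fun X hX => by rw [hhp X hX, exp_mul_ofReal_one_div_mul_log_add _ κ Cp (sub_pos.mpr hX.2)]
  have phase_sq_inv : ∀ X ∈ Ioo 0 A,
      exp (-2 * I * lam * hplus X) = exp (-2 * θ) * ((A - X : ℝ) : ℂ) ^ (-2 * μ) := by
    intro X hX
    rw [hhp X hX, exp_mul_ofReal_one_div_mul_log_add _ κ Cp (sub_pos.mpr hX.2), hθ_def, hμ_def]
    ring_nf
  intro n
  change ∀ X ∈ Ioo 0 A, ap n X = modelTerm θ μ n (A - X)
  induction n with
  | zero =>
    intro X hX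
    rw [h0 X hX, phase X hX, modelTerm_zero θ hμ]
  | succ n ih =>
    intro X hX
    rw [hrec n X hX, phase X hX, ← modelTerm_succ hX.2 θ hμ]
    congr 1
    refine setIntegral_congr_fun measurableSet_Ioo fun Y hY =>
      setIntegral_congr_fun measurableSet_Ioo fun T hT => ?_
    have hY' : Y ∈ Ioo 0 A := ⟨hX.1.trans hY.1, hY.2⟩
    rw [phase_sq_inv Y hY', phase T ⟨hY'.1.trans hT.1, hT.2⟩, ih T ⟨hY'.1.trans hT.1, hT.2⟩]

/-- Explicit formula for the iterated coefficients `aₙ⁺` built from the model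
diffeomorphism `h₊(X) = κ⁻¹ log(A-X) + Cp`:
`aₙ⁺(X) = e^{iλCp} Γ(1-ν)/(2^{2n} Γ(n+1-ν) n!) (A-X)^{2n+iλ/κ}`,
where `ν = 1/2 - iλ/κ`. -/
theorem model_coefficients_formula
    (lam κ A Cp : ℝ) (hκ : κ < 0) (hA : 0 < A)
    (hplus : ℝ → ℝ) (hhp : ∀ X ∈ Ioo 0 A, hplus X = (1 / κ) * Real.log (A - X) + Cp)
    (ap : ℕ → ℝ → ℂ)
    (h0 : ∀ X ∈ Ioo 0 A, ap 0 X = Complex.exp (Complex.I * (lam : ℂ) * (hplus X : ℂ)))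
    (hrec : ∀ n : ℕ, ∀ X ∈ Ioo 0 A, ap (n + 1) X =
      Complex.exp (Complex.I * (lam : ℂ) * (hplus X : ℂ)) *
        ∫ Y in Ioo X A, ∫ T in Ioo Y A,
          Complex.exp (-2 * Complex.I * (lam : ℂ) * (hplus Y : ℂ)) *
            Complex.exp (Complex.I * (lam : ℂ) * (hplus T : ℂ)) * ap n T) :
    ∀ n : ℕ, ∀ X ∈ Ioo 0 A,
      ap n X = Complex.exp (Complex.I * (lam : ℂ) * (Cp : ℂ)) *
        (Complex.Gamma (1 - (1 / 2 - Complex.I * (lam : ℂ) / (κ : ℂ))) /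
          (2 ^ (2 * n) *
            Complex.Gamma ((n : ℂ) + 1 - (1 / 2 - Complex.I * (lam : ℂ) / (κ : ℂ))) *
            (n.factorial : ℂ))) *
        ((A - X : ℝ) : ℂ) ^ ((2 * n : ℂ) + Complex.I * (lam : ℂ) / (κ : ℂ)) :=
  model_coefficients_formula_general lam κ A Cp hplus hhp ap h0 hrec
end

section
/- Let $A > 0$, $C > 0$, and let $(e_n)_{n \ge 0}$ be functions on an interval $(X_0, A)$ satisfying $|e_0(X)| \le \frac{C}{2}(A-X)^2$ and the recursive bound $|e_n(X)| \le \int_X^A \int_Y^A \big( C n \frac{(A-T)^{2n}}{(2n)!} + C \frac{(A-T)^{2n}}{(2n)!} \big)\, dT\, dY$ for $n \ge 1$. Then for all $n \ge 0$ and $X \in (X_0, A)$: $|e_n(X)| \le C(n+1)\frac{(A-X)^{2n+2}}{(2n+2)!}$. Consequently, for all $z > 0$ and $X \in (X_0,A)$, $\sum_{n=0}^\infty |e_n(X)| z^{2n} \le \frac{C}{z}(A-X) e^{z(A-X)}$. -/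
open Set Real

private lemma integral_A_sub_pow (a b : ℝ) (p : ℕ) :
    (∫ t in b..a, (a - t) ^ p) = (a - b) ^ (p + 1) / (p + 1) := by
  have := intervalIntegral.integral_comp_sub_left (a := b) (b := a)
    (fun u => u ^ p) a
  rw [this, integral_pow]
  simp

/-- Error estimate: from `|e₀(X)| ≤ C(A-X)²/2` and the recursive integral bound,
one gets `|eₙ(X)| ≤ C(n+1)(A-X)^{2n+2}/(2n+2)!`, and hence
`∑ |eₙ(X)| z^{2n} ≤ (C/z)(A-X)e^{z(A-X)}` for `z > 0`. -/
theorem error_term_estimate (A X0 C : ℝ) (hX0A : X0 < A) (hC : 0 < C)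
    (e : ℕ → ℝ → ℂ)
    (h0 : ∀ X ∈ Ioo X0 A, ‖e 0 X‖ ≤ C / 2 * (A - X) ^ 2)
    (hrec : ∀ n : ℕ, 1 ≤ n → ∀ X ∈ Ioo X0 A, ‖e n X‖ ≤
      ∫ Y in X..A, ∫ T in Y..A,
        (C * n * (A - T) ^ (2 * n) / (2 * n).factorial +
          C * (A - T) ^ (2 * n) / (2 * n).factorial)) :
    (∀ n : ℕ, ∀ X ∈ Ioo X0 A,
      ‖e n X‖ ≤ C * (n + 1) * (A - X) ^ (2 * n + 2) / (2 * n + 2).factorial) ∧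
    (∀ z : ℝ, 0 < z → ∀ X ∈ Ioo X0 A,
      (∑' n : ℕ, ‖e n X‖ * z ^ (2 * n)) ≤
        C / z * (A - X) * Real.exp (z * (A - X))) := by
  have key : ∀ n : ℕ, ∀ X ∈ Ioo X0 A,
      ‖e n X‖ ≤ C * (n + 1) * (A - X) ^ (2 * n + 2) / (2 * n + 2).factorial := by
    intro n X hX
    rcases Nat.eq_zero_or_pos n with rfl | hn
    · refine (h0 X hX).trans (le_of_eq ?_)
      norm_num [Nat.factorial]
      ring
    · have h := hrec n hn X hX
      have hfac : ((2 * n + 2).factorial : ℝ)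
          = (2 * n + 2) * ((2 * n + 1) * (2 * n).factorial) := by
        rw [show 2 * n + 2 = (2 * n + 1) + 1 from rfl, Nat.factorial_succ,
          Nat.factorial_succ]
        push_cast; ring
      have hinner : ∀ Y : ℝ,
          (∫ T in Y..A, (C * n * (A - T) ^ (2 * n) / (2 * n).factorial +
            C * (A - T) ^ (2 * n) / (2 * n).factorial))
          = (C * n + C) / (2 * n).factorial * ((A - Y) ^ (2 * n + 1) / (2 * n + 1)) := by
        intro Y
        have h1 : (∫ T in Y..A, (C * n * (A - T) ^ (2 * n) / (2 * n).factorial +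
            C * (A - T) ^ (2 * n) / (2 * n).factorial))
            = ∫ T in Y..A, ((C * n + C) / (2 * n).factorial) * (A - T) ^ (2 * n) := by
          apply intervalIntegral.integral_congr
          intro t _
          dsimp only
          ring
        rw [h1, intervalIntegral.integral_const_mul, integral_A_sub_pow]
        push_cast
        ring
      have houter : (∫ Y in X..A, ∫ T in Y..A,
            (C * n * (A - T) ^ (2 * n) / (2 * n).factorial +
              C * (A - T) ^ (2 * n) / (2 * n).factorial))
          = (C * n + C) / (2 * n).factorial / (2 * n + 1)
              * ((A - X) ^ (2 * n + 2) / (2 * n + 2)) := by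
        have h1 : (∫ Y in X..A, ∫ T in Y..A,
              (C * n * (A - T) ^ (2 * n) / (2 * n).factorial +
                C * (A - T) ^ (2 * n) / (2 * n).factorial))
            = ∫ Y in X..A, ((C * n + C) / (2 * n).factorial / (2 * n + 1))
                * (A - Y) ^ (2 * n + 1) := by
          apply intervalIntegral.integral_congr
          intro Y _
          dsimp only
          rw [hinner Y]
          ring
        rw [h1, intervalIntegral.integral_const_mul,
          integral_A_sub_pow A X (2 * n + 1)]
        push_cast
        ring
      rw [houter] at h
      refine h.trans (le_of_eq ?_)
      rw [hfac]
      have h1 : ((2 * n).factorial : ℝ) ≠ 0 := by positivity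
      have h2 : (2 * (n : ℝ) + 1) ≠ 0 := by positivity
      have h3 : (2 * (n : ℝ) + 2) ≠ 0 := by positivity
      field_simp
  refine ⟨key, ?_⟩
  intro z hz X hX
  obtain ⟨hX0, hXA⟩ := hX
  set w : ℝ := z * (A - X) with hw
  have hAX : 0 < A - X := by linarith
  have hwpos : 0 < w := by positivity
  -- majorant series
  set M : ℕ → ℝ := fun n => C / (2 * z ^ 2) * (w ^ (2 * n + 2) / (2 * n + 1).factorial)
    with hM
  have hbound : ∀ n : ℕ, ‖e n X‖ * z ^ (2 * n) ≤ M n := by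
    intro n
    have h1 := key n X ⟨hX0, hXA⟩
    have hzp : (0 : ℝ) < z ^ (2 * n) := by positivity
    have heq : C * (n + 1) * (A - X) ^ (2 * n + 2) / (2 * n + 2).factorial * z ^ (2 * n)
        = M n := by
      have hfac : ((2 * n + 2).factorial : ℝ) = (2 * n + 2) * (2 * n + 1).factorial := by
        rw [show 2 * n + 2 = (2 * n + 1) + 1 from rfl, Nat.factorial_succ]
        push_cast; ring
      have hwp : w ^ (2 * n + 2) = z ^ (2 * n + 2) * (A - X) ^ (2 * n + 2) := by
        rw [hw, mul_pow]
      have h1 : ((2 * n + 1).factorial : ℝ) ≠ 0 := by positivity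
      have hz0 : z ≠ 0 := ne_of_gt hz
      rw [hM]
      simp only
      rw [hwp, hfac]
      field_simp
      ring
    calc ‖e n X‖ * z ^ (2 * n)
        ≤ C * (n + 1) * (A - X) ^ (2 * n + 2) / (2 * n + 2).factorial * z ^ (2 * n) := by
          exact mul_le_mul_of_nonneg_right h1 (le_of_lt hzp)
      _ = M n := heq
  have hsumExp : Summable (fun k : ℕ => w ^ k / k.factorial) :=
    Real.summable_pow_div_factorial w
  have hinj : Function.Injective (fun n : ℕ => 2 * n + 1) := by
    intro a b hab; dsimp only at hab; omega
  have hsumOdd : Summable (fun n : ℕ => w ^ (2 * n + 1) / (2 * n + 1).factorial) :=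
    hsumExp.comp_injective hinj
  have hsumM : Summable M := by
    have : M = fun n => (C / (2 * z ^ 2) * w) *
        (w ^ (2 * n + 1) / (2 * n + 1).factorial) := by
      funext n
      rw [hM]
      simp only
      rw [pow_succ]
      ring
    rw [this]
    exact hsumOdd.mul_left _
  have hsumE : Summable (fun n : ℕ => ‖e n X‖ * z ^ (2 * n)) := by
    apply Summable.of_nonneg_of_le (fun n => by positivity) hbound hsumM
  have step1 : (∑' n : ℕ, ‖e n X‖ * z ^ (2 * n)) ≤ ∑' n, M n :=
    Summable.tsum_le_tsum hbound hsumE hsumM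
  have step2 : (∑' n, M n) = (C / (2 * z ^ 2) * w) *
      ∑' n : ℕ, w ^ (2 * n + 1) / (2 * n + 1).factorial := by
    rw [← tsum_mul_left]
    congr 1
    funext n
    rw [hM]
    simp only
    rw [pow_succ]
    ring
  have step3 : (∑' n : ℕ, w ^ (2 * n + 1) / (2 * n + 1).factorial)
      ≤ ∑' k : ℕ, w ^ k / k.factorial := by
    apply Summable.tsum_le_tsum_of_inj (fun n : ℕ => 2 * n + 1) hinj
    · intro c _
      positivity
    · intro n
      exact le_rfl
    · exact hsumOdd
    · exact hsumExp
  have hexp : (∑' k : ℕ, w ^ k / k.factorial) = Real.exp w := by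
    rw [Real.exp_eq_exp_ℝ, NormedSpace.exp_eq_tsum_div]
  calc (∑' n : ℕ, ‖e n X‖ * z ^ (2 * n))
      ≤ (C / (2 * z ^ 2) * w) * ∑' n : ℕ, w ^ (2 * n + 1) / (2 * n + 1).factorial := by
        rw [← step2]; exact step1
    _ ≤ (C / (2 * z ^ 2) * w) * Real.exp w := by
        apply mul_le_mul_of_nonneg_left _ (by positivity)
        rw [← hexp]; exact step3
    _ ≤ C / z * (A - X) * Real.exp w := by
        apply mul_le_mul_of_nonneg_right _ (Real.exp_pos w).le
        have heq2 : C / (2 * z ^ 2) * w = C * (A - X) / (2 * z) := by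
          rw [hw]; field_simp
        rw [heq2, div_mul_eq_mul_div]
        gcongr
        linarith
end

section
/- Let $M, \tilde M > 0$, $Q, \tilde Q \in \mathbb{R}$ with $Q^2 = \tilde Q^2 \ne 0$, and let $r, \tilde r > 0$ satisfy: (i) $12 M - \frac{24 Q^2}{r} = 12 \tilde M - \frac{24 \tilde Q^2}{\tilde r}$, and (ii) $2 - \frac{12 M}{r} + \frac{12 Q^2}{r^2} = 2 - \frac{12 \tilde M}{\tilde r} + \frac{12 \tilde Q^2}{\tilde r^2}$, where (i) and (ii) hold as $r$ and $\tilde r$ range over nondegenerate intervals related by (i) (equivalently, $\frac{1}{\tilde r} - \frac{1}{r} = \frac{\tilde M - M}{2Q^2} =: E$ is a constant, and (ii) holds for all $r$ in an open interval). Then $M = \tilde M$ and $r = \tilde r$. -/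
open Set

/- Put `x = 1/r`, `y = 1/r̃`. Identity (i) says `(M - M̃) = 2Q²(x - y)` and identity (ii) says
`M x - M̃ y = Q²(x² - y²)`; eliminating `Q²` leaves `(M + M̃)(x - y) = 0`, so `r̃ = r` pointwise
and then (i) gives `M = M̃`. -/

lemma eq_of_B3_eq_of_B2_eq {M Mt K r p : ℝ} (hr : r ≠ 0) (hp : p ≠ 0) (hMMt : M + Mt ≠ 0)
    (hi : 12 * M - 24 * K / r = 12 * Mt - 24 * K / p)
    (hii : 2 - 12 * M / r + 12 * K / r ^ 2 = 2 - 12 * Mt / p + 12 * K / p ^ 2) :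
    p = r := by
  have hi' : (M - Mt) * r * p = 2 * K * (p - r) := by
    field_simp at hi
    linear_combination hi / 12
  have hii' : Mt * r ^ 2 * p - M * r * p ^ 2 = K * (r ^ 2 - p ^ 2) := by
    field_simp at hii
    linear_combination hii / 12
  have hzero : (r * p * (M + Mt)) * (r - p) = 0 := by
    linear_combination (r + p) * hi' + 2 * hii'
  have hne : r * p * (M + Mt) ≠ 0 := mul_ne_zero (mul_ne_zero hr hp) hMMt
  exact (sub_eq_zero.mp ((mul_eq_zero.mp hzero).resolve_left hne)).symm

theorem inverse_problem_final_step_general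
    (M Mt Q Qt : ℝ) (hM : 0 < M) (hMt : 0 < Mt)
    (hQ : Q ^ 2 = Qt ^ 2)
    (r0 r1 : ℝ) (hr01 : r0 < r1) (hr0 : 0 < r0)
    (rt : ℝ → ℝ) (hrt_pos : ∀ r ∈ Ioo r0 r1, 0 < rt r)
    (hi : ∀ r ∈ Ioo r0 r1,
      12 * M - 24 * Q ^ 2 / r = 12 * Mt - 24 * Qt ^ 2 / rt r)
    (hii : ∀ r ∈ Ioo r0 r1,
      2 - 12 * M / r + 12 * Q ^ 2 / r ^ 2 =
        2 - 12 * Mt / rt r + 12 * Qt ^ 2 / (rt r) ^ 2) :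
    M = Mt ∧ ∀ r ∈ Ioo r0 r1, rt r = r := by
  rw [← hQ] at hi hii
  have hrt : ∀ r ∈ Ioo r0 r1, rt r = r := fun r hr =>
    eq_of_B3_eq_of_B2_eq (hr0.trans hr.1).ne' (hrt_pos r hr).ne' (add_pos hM hMt).ne'
      (hi r hr) (hii r hr)
  refine ⟨?_, hrt⟩
  obtain ⟨r, hr⟩ := nonempty_Ioo.mpr hr01
  have h := hi r hr
  rw [hrt r hr] at h
  linarith

/-- Final step of the inverse problem: the identities for `B³(a²)` and `B²(a²)`
holding on a nondegenerate interval force `M = M̃` and `r̃ = r`. -/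
theorem inverse_problem_final_step
    (M Mt Q Qt : ℝ) (hM : 0 < M) (hMt : 0 < Mt)
    (hQ : Q ^ 2 = Qt ^ 2) (hQne : Q ^ 2 ≠ 0)
    (r0 r1 : ℝ) (hr01 : r0 < r1) (hr0 : 0 < r0)
    (rt : ℝ → ℝ) (hrt_pos : ∀ r ∈ Ioo r0 r1, 0 < rt r)
    (hi : ∀ r ∈ Ioo r0 r1,
      12 * M - 24 * Q ^ 2 / r = 12 * Mt - 24 * Qt ^ 2 / rt r)
    (hii : ∀ r ∈ Ioo r0 r1,
      2 - 12 * M / r + 12 * Q ^ 2 / r ^ 2 =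
        2 - 12 * Mt / rt r + 12 * Qt ^ 2 / (rt r) ^ 2) :
    M = Mt ∧ ∀ r ∈ Ioo r0 r1, rt r = r :=
  inverse_problem_final_step_general M Mt Q Qt hM hMt hQ r0 r1 hr01 hr0 rt hrt_pos hi hii
end
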